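/- arXiv:2002.08311 — 7 statements merged into one kernel-verified Lean document; each statement's English description precedes it below -/
import Mathlib

section
/- In a graph G given by a U-bubble model, any two vertices lying in the same quadrant B_{i,j}^{r,s} of the same bubble are true twins: they are adjacent and have exactly the same neighbors outside themselves. -/
/-- A U-bubble model for a graph G: each vertex has a row, a column, and a
quadrant type given by two booleans (qr v = left end closed, i.e. type (+,*);
qs v = right end closed, i.e. type (*,+)), such that adjacency in G is exactly
as prescribed by the U-bubble model definition. -/
def IsUBubbleModel {V : Type*} (G : SimpleGraph V) (row col : V → ℕ)
    (qr qs : V → Bool) : Prop :=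
  ∀ u v, G.Adj u v ↔ u ≠ v ∧
    (col u = col v ∨
     (col u + 1 = col v ∧ (row v < row u ∨ (row u = row v ∧ qs u = true ∧ qr v = true))) ∨
     (col v + 1 = col u ∧ (row u < row v ∨ (row v = row u ∧ qs v = true ∧ qr u = true))))

namespace IsUBubbleModel

variable {V : Type*} {G : SimpleGraph V} {row col : V → ℕ} {qr qs : V → Bool}

theorem adj_of_col_eq (h : IsUBubbleModel G row col qr qs) {u v : V} (huv : u ≠ v)
    (hcol : col u = col v) : G.Adj u v :=
  (h u v).mpr ⟨huv, Or.inl hcol⟩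

theorem adj_iff_adj_of_eq (h : IsUBubbleModel G row col qr qs) {u v w : V}
    (hwu : w ≠ u) (hwv : w ≠ v) (hrow : row u = row v) (hcol : col u = col v)
    (hqr : qr u = qr v) (hqs : qs u = qs v) : G.Adj u w ↔ G.Adj v w := by
  rw [h u w, h v w, hrow, hcol, hqr, hqs]
  exact and_congr_left fun _ => iff_of_true hwu.symm hwv.symm

end IsUBubbleModel

/-- Two distinct vertices lying in the same quadrant of the same bubble of a
U-bubble model are true twins: they are adjacent and have exactly the same
neighbours apart from each other. -/
theorem ubm_same_quadrant_true_twins {V : Type*} (G : SimpleGraph V)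
    (row col : V → ℕ) (qr qs : V → Bool)
    (h : IsUBubbleModel G row col qr qs)
    (u v : V) (huv : u ≠ v)
    (hrow : row u = row v) (hcol : col u = col v)
    (hqr : qr u = qr v) (hqs : qs u = qs v) :
    G.Adj u v ∧ ∀ w, w ≠ u → w ≠ v → (G.Adj u w ↔ G.Adj v w) := by
  exact ⟨h.adj_of_col_eq huv hcol,
    fun w hwu hwv => h.adj_iff_adj_of_eq hwu hwv hrow hcol hqr hqs⟩
end

section
/- Every graph given by a U-bubble model is an intersection graph of unit-length real intervals of mixed types: concretely, if B has rows indexed 1..r and columns 1..k, setting ε = 1/r and assigning to each vertex v ∈ B_{i,j}^{(r',s')} the unit interval with left endpoint j + (i−1)ε, open/closed at each end according to the quadrant type (r',s'), yields an intersection representation isomorphic to G(B). -/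
/-- The unit interval with left endpoint l, closed on the left iff a,
closed on the right iff b. -/
def uInt (l : ℝ) (a b : Bool) : Set ℝ :=
  {x | (if a then l ≤ x else l < x) ∧ (if b then x ≤ l + 1 else x < l + 1)}

/-!
Write the left endpoint of the interval of `v` as `col v + f v` with `f v = row v / r ∈ [0, 1)`.
Two unit intervals share an interior point iff their left endpoints are less than `1` apart, and for
integer-plus-fraction endpoints this says: same column, or consecutive columns with the fraction of
the later one smaller, i.e. its row smaller. Otherwise they meet at most in one point, which happens
iff the endpoints differ by exactly `1` (consecutive columns, equal rows) and the touching ends are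
both closed — exactly the remaining clause of the U-bubble adjacency.
-/

open Set

section UnitInterval

variable {l : ℝ} {a b : Bool}

lemma uInt_subset_Icc : uInt l a b ⊆ Icc l (l + 1) := by
  rintro x ⟨hl, hr⟩
  constructor
  · cases a <;> simp only [Bool.false_eq_true, if_false, if_true] at hl <;> linarith
  · cases b <;> simp only [Bool.false_eq_true, if_false, if_true] at hr <;> linarith

lemma Ioo_subset_uInt : Ioo l (l + 1) ⊆ uInt l a b := by
  rintro x ⟨hl, hr⟩
  constructor <;> split_ifs <;> linarith

lemma left_mem_uInt : l ∈ uInt l true b :=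
  ⟨le_rfl, by split_ifs <;> linarith⟩

lemma right_mem_uInt : l + 1 ∈ uInt l a true :=
  ⟨by split_ifs <;> linarith, le_rfl⟩

lemma eq_true_of_left_mem_uInt (h : l ∈ uInt l a b) : a = true := by
  cases a
  · simp [uInt] at h
  · rfl

lemma eq_true_of_right_mem_uInt (h : l + 1 ∈ uInt l a b) : b = true := by
  cases b
  · simp [uInt] at h
  · rfl

lemma uInt_inter_nonempty_iff {l l' : ℝ} {a b a' b' : Bool} :
    (uInt l a b ∩ uInt l' a' b').Nonempty ↔
      |l - l'| < 1 ∨ (l' = l + 1 ∧ b = true ∧ a' = true) ∨ (l = l' + 1 ∧ b' = true ∧ a = true) := by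
  constructor
  · rintro ⟨x, hx, hx'⟩
    obtain ⟨hlx, hxl⟩ := uInt_subset_Icc hx
    obtain ⟨hlx', hxl'⟩ := uInt_subset_Icc hx'
    rcases le_or_gt 1 (l' - l) with hle | hlt
    · obtain rfl : l' = l + 1 := by linarith
      obtain rfl : x = l + 1 := by linarith
      exact Or.inr (Or.inl ⟨rfl, eq_true_of_right_mem_uInt hx, eq_true_of_left_mem_uInt hx'⟩)
    rcases le_or_gt 1 (l - l') with hle' | hlt'
    · obtain rfl : l = l' + 1 := by linarith
      obtain rfl : x = l' + 1 := by linarith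
      exact Or.inr (Or.inr ⟨rfl, eq_true_of_right_mem_uInt hx', eq_true_of_left_mem_uInt hx⟩)
    exact Or.inl (abs_sub_lt_iff.2 ⟨hlt', hlt⟩)
  · rintro (hlt | ⟨rfl, rfl, rfl⟩ | ⟨rfl, rfl, rfl⟩)
    · have : (Ioo l (l + 1) ∩ Ioo l' (l' + 1)).Nonempty := by
        rw [abs_sub_lt_iff] at hlt
        rw [Ioo_inter_Ioo, nonempty_Ioo, max_lt_iff, lt_min_iff, lt_min_iff]
        exact ⟨⟨by linarith, by linarith⟩, by linarith, by linarith⟩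
      exact this.mono (inter_subset_inter Ioo_subset_uInt Ioo_subset_uInt)
    · exact ⟨l + 1, right_mem_uInt, left_mem_uInt⟩
    · exact ⟨l' + 1, left_mem_uInt, right_mem_uInt⟩

end UnitInterval

section IntegerPlusFraction

variable {c c' : ℕ} {f f' : ℝ}

lemma abs_add_sub_add_lt_one_iff (hf : f ∈ Ico 0 1) (hf' : f' ∈ Ico 0 1) :
    |(c + f) - (c' + f')| < 1 ↔
      c = c' ∨ (c + 1 = c' ∧ f' < f) ∨ (c' + 1 = c ∧ f < f') := by
  wlog hcc : c ≤ c' generalizing c c' f f'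
  · rw [abs_sub_comm, this hf' hf (by omega), eq_comm]
    tauto
  obtain ⟨hf0, hf1⟩ := hf
  obtain ⟨hf0', hf1'⟩ := hf'
  rw [abs_sub_lt_iff]
  obtain rfl | rfl | h : c = c' ∨ c + 1 = c' ∨ c + 2 ≤ c' := by omega
  · exact iff_of_true ⟨by linarith, by linarith⟩ (Or.inl rfl)
  · push_cast
    constructor
    · rintro ⟨-, h⟩
      exact Or.inr (Or.inl ⟨rfl, by linarith⟩)
    · rintro (h | ⟨-, h⟩ | ⟨h, -⟩)
      · omega
      · constructor <;> linarith
      · omega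
  · have : (c : ℝ) + 2 ≤ c' := by exact_mod_cast h
    refine iff_of_false (fun h ↦ by linarith [h.2]) ?_
    omega

lemma add_eq_add_add_one_iff (hf : f ∈ Ico 0 1) (hf' : f' ∈ Ico 0 1) :
    (c' : ℝ) + f' = c + f + 1 ↔ c + 1 = c' ∧ f' = f := by
  obtain ⟨hf0, hf1⟩ := hf
  obtain ⟨hf0', hf1'⟩ := hf'
  constructor
  · intro h
    have hc : c + 1 = c' := by
      have h₁ : (c : ℝ) < c' := by linarith
      have h₂ : (c' : ℝ) < c + 2 := by linarith
      norm_cast at h₁ h₂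
      omega
    refine ⟨hc, ?_⟩
    rw [← hc] at h
    push_cast at h
    linarith
  · rintro ⟨rfl, rfl⟩
    push_cast
    ring

end IntegerPlusFraction
theorem ubm_to_mixed_unit_interval_representation_general {V : Type*} (G : SimpleGraph V)
    (row col : V → ℕ) (qr qs : V → Bool)
    (h : IsUBubbleModel G row col qr qs)
    (r : ℕ) (hrow : ∀ v, row v < r) :
    ∀ u v : V, u ≠ v →
      ((uInt ((col u : ℝ) + (row u : ℝ) * (1 / r)) (qr u) (qs u) ∩
        uInt ((col v : ℝ) + (row v : ℝ) * (1 / r)) (qr v) (qs v)).Nonempty ↔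
        G.Adj u v) := by
  intro u v huv
  have hr : (0 : ℝ) < r := Nat.cast_pos.2 (hrow u).pos
  have hε : (0 : ℝ) < 1 / r := by positivity
  have hrow_Ico (w : V) : (row w : ℝ) * (1 / r) ∈ Ico 0 1 := by
    refine ⟨by positivity, ?_⟩
    rw [mul_one_div, div_lt_one hr]
    exact_mod_cast hrow w
  have hmono : StrictMono fun i : ℕ ↦ (i : ℝ) * (1 / r) :=
    fun i j hij ↦ mul_lt_mul_of_pos_right (Nat.cast_lt.2 hij) hε
  rw [h u v, uInt_inter_nonempty_iff, abs_add_sub_add_lt_one_iff (hrow_Ico u) (hrow_Ico v),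
    add_eq_add_add_one_iff (hrow_Ico u) (hrow_Ico v),
    add_eq_add_add_one_iff (hrow_Ico v) (hrow_Ico u)]
  simp only [hmono.lt_iff_lt, hmono.injective.eq_iff]
  tauto

/-- Every graph given by a U-bubble model with rows indexed below r is an
intersection graph of mixed unit intervals: assigning to a vertex v the unit
interval with left endpoint (col v) + (row v)·(1/r), with ends open/closed
according to the quadrant type of v, yields an intersection representation
isomorphic to the graph. -/
theorem ubm_to_mixed_unit_interval_representation {V : Type*} (G : SimpleGraph V)
    (row col : V → ℕ) (qr qs : V → Bool)
    (h : IsUBubbleModel G row col qr qs)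
    (r : ℕ) (hr : 0 < r) (hrow : ∀ v, row v < r) :
    ∀ u v : V, u ≠ v →
      ((uInt ((col u : ℝ) + (row u : ℝ) * (1 / r)) (qr u) (qs u) ∩
        uInt ((col v : ℝ) + (row v : ℝ) * (1 / r)) (qr v) (qs v)).Nonempty ↔
        G.Adj u v) :=
  ubm_to_mixed_unit_interval_representation_general G row col qr qs h r hrow
end

section
/- Let G be a graph given by a U-bubble model with columns C_j. For consecutive columns j, j+1 and a row index i, the set consisting of all vertices of column j in rows strictly below i, all vertices of column j+1 in rows strictly above i, together with the quadrants B_{i,j}^{*+} ∪ B_{i,j+1}^{+*} in row i, forms a clique of G. -/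
namespace IsUBubbleModel

variable {V : Type*} {G : SimpleGraph V} {row col : V → ℕ} {qr qs : V → Bool}

theorem isClique_of_col_eq (h : IsUBubbleModel G row col qr qs) {s : Set V} {j : ℕ}
    (hs : ∀ v ∈ s, col v = j) : G.IsClique s := by
  intro u hu v hv huv
  exact (h u v).2 ⟨huv, Or.inl ((hs u hu).trans (hs v hv).symm)⟩

theorem adj_of_col_succ (h : IsUBubbleModel G row col qr qs) {u v : V} (huv : u ≠ v)
    (hcol : col u + 1 = col v)
    (hrow : row v < row u ∨ (row u = row v ∧ qs u = true ∧ qr v = true)) : G.Adj u v :=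
  (h u v).2 ⟨huv, Or.inr (Or.inl ⟨hcol, hrow⟩)⟩

end IsUBubbleModel

/-- In a graph given by a U-bubble model, for consecutive columns j, j+1 and a
row i, the vertices of column j strictly below row i, the vertices of column
j+1 strictly above row i, together with the quadrants B_{i,j}^{*+} and
B_{i,j+1}^{+*} of row i, form a clique. -/
theorem ubm_split_columns_isClique {V : Type*} (G : SimpleGraph V)
    (row col : V → ℕ) (qr qs : V → Bool)
    (h : IsUBubbleModel G row col qr qs) (i j : ℕ) :
    G.IsClique {v | (col v = j ∧ i < row v) ∨ (col v = j + 1 ∧ row v < i) ∨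
      (col v = j ∧ row v = i ∧ qs v = true) ∨
      (col v = j + 1 ∧ row v = i ∧ qr v = true)} := by
  set lower := {v | col v = j ∧ (i < row v ∨ (row v = i ∧ qs v = true))}
  set upper := {v | col v = j + 1 ∧ (row v < i ∨ (row v = i ∧ qr v = true))}
  have hsplit : {v | (col v = j ∧ i < row v) ∨ (col v = j + 1 ∧ row v < i) ∨
      (col v = j ∧ row v = i ∧ qs v = true) ∨
      (col v = j + 1 ∧ row v = i ∧ qr v = true)} = lower ∪ upper := by
    ext v
    simp only [lower, upper, Set.mem_ofPred_eq, Set.mem_union]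
    tauto
  rw [hsplit, SimpleGraph.IsClique, Set.pairwise_union]
  refine ⟨h.isClique_of_col_eq fun v hv => hv.1, h.isClique_of_col_eq fun v hv => hv.1, ?_⟩
  rintro u ⟨hu, hu_row⟩ v ⟨hv, hv_row⟩ huv
  have hrow : row v < row u ∨ (row u = row v ∧ qs u = true ∧ qr v = true) := by
    rcases hu_row with hu_row | ⟨hu_row, hqs⟩ <;> rcases hv_row with hv_row | ⟨hv_row, hqr⟩
    exacts [Or.inl (by omega), Or.inl (by omega), Or.inl (by omega), Or.inr ⟨by omega, hqs, hqr⟩]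
  have hadj := h.adj_of_col_succ huv (by omega) hrow
  exact ⟨hadj, hadj.symm⟩
end

section
/- Let G be a graph admitting a U-bubble model with k columns. Then the clique-width of G is at most k + 3. -/
/-- Clique-width expressions with labels in Fin k: vertex creation with a
label, disjoint union, relabelling i → j, and inserting all edges between
labels i and j for i ≠ j. -/
inductive CW (k : ℕ) : Type
  | vert : Fin k → CW k
  | union : CW k → CW k → CW k
  | relabel : Fin k → Fin k → CW k → CW k
  | join : (i j : Fin k) → i ≠ j → CW k → CW k

structure LGraph (k : ℕ) : Type 1 where
  V : Type
  G : SimpleGraph V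
  lab : V → Fin k

/-- The disjoint-sum relation of two relations. -/
def sumRel {α β : Type} (ra : α → α → Prop) (rb : β → β → Prop) :
    α ⊕ β → α ⊕ β → Prop
  | Sum.inl x, Sum.inl y => ra x y
  | Sum.inr x, Sum.inr y => rb x y
  | _, _ => False

def evalCW {k : ℕ} (e : CW k) : LGraph k :=
  match e with
  | .vert l => ⟨PUnit, ⊥, fun _ => l⟩
  | .union a b =>
      let A := evalCW a
      let B := evalCW b
      ⟨A.V ⊕ B.V, SimpleGraph.fromRel (sumRel A.G.Adj B.G.Adj), Sum.elim A.lab B.lab⟩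
  | .relabel i j a =>
      let A := evalCW a
      ⟨A.V, A.G, fun v => if A.lab v = i then j else A.lab v⟩
  | .join i j _ a =>
      let A := evalCW a
      ⟨A.V, A.G ⊔ SimpleGraph.fromRel (fun x y => A.lab x = i ∧ A.lab y = j), A.lab⟩

/-- G can be constructed by a clique-width expression with at most k labels. -/
def HasCliqueWidthLE {V : Type} (G : SimpleGraph V) (k : ℕ) : Prop :=
  ∃ e : CW k, Nonempty (G ≃g (evalCW e).G)

/-- The clique-width of a graph: the least number of labels needed to
construct it by a clique-width expression. -/
noncomputable def cliqueWidth {V : Type} (G : SimpleGraph V) : ℕ :=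
  sInf {k | HasCliqueWidthLE G k}

/-!
Create the vertices bubble by bubble, rows in decreasing order and, within a row, columns from
right to left. When a vertex `v` of `B r j` is created, its neighbours among the vertices created so
far are all of column `j`, all of column `j - 1` (so far only bubbles of larger row index), and,
if `v` has type `(*,+)`, the vertices of type `(+,*)` in `B r (j + 1)`. So it suffices to keep one
label per column, one for the `(+,*)`-vertices of the current bubble, one for those of
`B r (j + 1)`, and a fresh one for `v`, which is joined to the relevant label classes and then
relabelled. Moving on to the next bubble only needs relabellings.
-/
namespace CW

variable {n : ℕ} {V : Type}

def Realizes (e : CW n) (H : SimpleGraph V) (S : Set V) (lab : V → Fin n) : Prop :=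
  ∃ f : (evalCW e).V → V, Function.Injective f ∧ Set.range f = S ∧
    (∀ x y, (evalCW e).G.Adj x y ↔ H.Adj (f x) (f y)) ∧ ∀ x, (evalCW e).lab x = lab (f x)

theorem realizes_vert (H : SimpleGraph V) (lab : V → Fin n) (v : V) :
    (vert (lab v)).Realizes H {v} lab :=
  ⟨fun _ => v, fun _ _ _ => rfl,
    Set.ext fun _ => ⟨fun ⟨_, h⟩ => h.symm, fun h => ⟨⟨⟩, h.symm⟩⟩,
    fun _ _ => iff_of_false id H.irrefl, fun _ => rfl⟩

namespace Realizes

variable {e : CW n} {H H' : SimpleGraph V} {S : Set V} {lab lab' : V → Fin n}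

theorem congr (he : e.Realizes H S lab) (hH : ∀ x ∈ S, ∀ y ∈ S, H.Adj x y ↔ H'.Adj x y)
    (hlab : ∀ x ∈ S, lab x = lab' x) : e.Realizes H' S lab' := by
  obtain ⟨f, hinj, rfl, hadj, hflab⟩ := he
  exact ⟨f, hinj, rfl, fun x y => (hadj x y).trans (hH _ ⟨x, rfl⟩ _ ⟨y, rfl⟩),
    fun x => (hflab x).trans (hlab _ ⟨x, rfl⟩)⟩

theorem relabel (he : e.Realizes H S lab) (i j : Fin n) :
    (CW.relabel i j e).Realizes H S (Function.update id i j ∘ lab) := by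
  obtain ⟨f, hinj, hS, hadj, hflab⟩ := he
  refine ⟨f, hinj, hS, hadj, fun (x : (evalCW e).V) => ?_⟩
  change (if (evalCW e).lab x = i then j else (evalCW e).lab x) = _
  simp only [Function.comp_apply, Function.update_apply, id, hflab]

theorem join (he : e.Realizes H S lab) {i j : Fin n} (hij : i ≠ j) :
    (CW.join i j hij e).Realizes (H ⊔ SimpleGraph.fromRel fun x y => lab x = i ∧ lab y = j)
      S lab := by
  obtain ⟨f, hinj, hS, hadj, hflab⟩ := he
  refine ⟨f, hinj, hS, fun (x y : (evalCW e).V) => ?_, hflab⟩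
  change (evalCW e).G.Adj x y ∨ (SimpleGraph.fromRel fun x y =>
    (evalCW e).lab x = i ∧ (evalCW e).lab y = j).Adj x y ↔ _
  simp only [SimpleGraph.sup_adj, SimpleGraph.fromRel_adj, hadj, hflab, hinj.ne_iff]

theorem union {e₁ e₂ : CW n} {S₁ S₂ : Set V} (h₁ : e₁.Realizes H S₁ lab)
    (h₂ : e₂.Realizes H S₂ lab) (hdisj : Disjoint S₁ S₂)
    (hcross : ∀ x ∈ S₁, ∀ y ∈ S₂, ¬ H.Adj x y) :
    (CW.union e₁ e₂).Realizes H (S₁ ∪ S₂) lab := by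
  obtain ⟨f₁, hinj₁, rfl, hadj₁, hlab₁⟩ := h₁
  obtain ⟨f₂, hinj₂, rfl, hadj₂, hlab₂⟩ := h₂
  refine ⟨Sum.elim f₁ f₂, ?_, Set.Sum.elim_range f₁ f₂, ?_, ?_⟩
  · exact hinj₁.sumElim hinj₂ fun a b => Set.disjoint_range_iff.mp hdisj a b
  · rintro (x | x) (y | y) <;> rw [show (evalCW (CW.union e₁ e₂)).G = SimpleGraph.fromRel
      (sumRel (evalCW e₁).G.Adj (evalCW e₂).G.Adj) from rfl, SimpleGraph.fromRel_adj]
    · simp only [sumRel, hadj₁, H.adj_comm (f₁ y), or_self, Sum.elim_inl, ne_eq, Sum.inl.injEq]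
      exact ⟨And.right, fun h => ⟨fun hxy => h.ne (congrArg _ hxy), h⟩⟩
    · simpa [sumRel] using hcross _ ⟨x, rfl⟩ _ ⟨y, rfl⟩
    · simpa [sumRel, H.adj_comm] using hcross _ ⟨y, rfl⟩ _ ⟨x, rfl⟩
    · simp only [sumRel, hadj₂, H.adj_comm (f₂ y), or_self, Sum.elim_inr, ne_eq, Sum.inr.injEq]
      exact ⟨And.right, fun h => ⟨fun hxy => h.ne (congrArg _ hxy), h⟩⟩
  · rintro (x | x)
    exacts [hlab₁ x, hlab₂ x]

end Realizes

def joinAll (a : Fin n) : List (Fin n) → CW n → CW n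
  | [], e => e
  | l :: L, e => if h : a = l then joinAll a L e else join a l h (joinAll a L e)

theorem Realizes.joinAll {e : CW n} {H : SimpleGraph V} {S : Set V} {lab : V → Fin n}
    (he : e.Realizes H S lab) {a : Fin n} {L : List (Fin n)} (haL : a ∉ L) :
    (e.joinAll a L).Realizes (H ⊔ SimpleGraph.fromRel fun x y => lab x = a ∧ lab y ∈ L)
      S lab := by
  induction L with
  | nil => exact he.congr (fun x _ y _ => by simp) fun _ _ => rfl
  | cons l L ih =>
    rw [List.mem_cons, not_or] at haL
    obtain ⟨hal, haL⟩ := haL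
    rw [CW.joinAll, dif_neg hal]
    refine ((ih haL).join hal).congr (fun x _ y _ => ?_) fun _ _ => rfl
    simp only [SimpleGraph.sup_adj, SimpleGraph.fromRel_adj, List.mem_cons]
    tauto

def Buildable (n : ℕ) (H : SimpleGraph V) (S : Set V) (lab : V → Fin n) : Prop :=
  S = ∅ ∨ ∃ e : CW n, e.Realizes H S lab

namespace Buildable

variable {H : SimpleGraph V} {S : Set V} {lab lab' : V → Fin n}

theorem congr (hS : Buildable n H S lab) (hlab : ∀ x ∈ S, lab x = lab' x) :
    Buildable n H S lab' :=
  hS.imp_right fun ⟨_, he⟩ => ⟨_, he.congr (fun _ _ _ _ => Iff.rfl) hlab⟩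

theorem relabel (hS : Buildable n H S lab) (i j : Fin n) :
    Buildable n H S (Function.update id i j ∘ lab) :=
  hS.imp_right fun ⟨_, he⟩ => ⟨_, he.relabel i j⟩

theorem insert (hS : Buildable n H S lab) {v : V} (hv : v ∉ S) {a : Fin n}
    (ha : ∀ u ∈ S, lab u ≠ a) {L : List (Fin n)} (haL : a ∉ L)
    (hN : ∀ u ∈ S, H.Adj v u ↔ lab u ∈ L) : Buildable n H (insert v S) lab := by
  classical
  right
  rcases hS with rfl | ⟨e, he⟩
  · exact ⟨_, by simpa using realizes_vert H lab v⟩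
  set lab₁ := Function.update lab v a
  have hne : ∀ u ∈ S, u ≠ v := fun u hu huv => hv (huv ▸ hu)
  have hlab₁ : ∀ u ∈ S, lab₁ u = lab u := fun u hu => Function.update_of_ne (hne u hu) _ _
  have hS₁ : e.Realizes (H.deleteIncidenceSet v) S lab₁ :=
    he.congr (fun x hx y hy => by simp [SimpleGraph.deleteIncidenceSet_adj, hne x hx, hne y hy])
      fun x hx => (hlab₁ x hx).symm
  have hv₁ : (vert a).Realizes (H.deleteIncidenceSet v) {v} lab₁ := by
    simpa [lab₁] using realizes_vert (H.deleteIncidenceSet v) lab₁ v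
  have hSv := ((hS₁.union hv₁ (Set.disjoint_singleton_right.mpr hv) fun x _ y hy => by
    simp [SimpleGraph.deleteIncidenceSet_adj, Set.mem_singleton_iff.mp hy]).joinAll haL).relabel
    a (lab v)
  rw [Set.union_singleton] at hSv
  refine ⟨_, hSv.congr (fun x hx y hy => ?_) fun x hx => ?_⟩
  · simp only [SimpleGraph.sup_adj, SimpleGraph.deleteIncidenceSet_adj, SimpleGraph.fromRel_adj]
    rcases hx with rfl | hx <;> rcases hy with rfl | hy
    · simp
    · simp [lab₁, hne y hy, ha y hy, hN y hy, (hne y hy).symm]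
    · simp [lab₁, hne x hx, ha x hx, hN x hx, H.adj_comm x]
    · simp [hlab₁ x hx, hlab₁ y hy, hne x hx, hne y hy, ha x hx, ha y hy]
  · rcases hx with rfl | hx
    · simp [lab₁]
    · simp [hlab₁ x hx, Function.update_of_ne (ha x hx)]

end Buildable

theorem finite_evalCW_V (e : CW n) : Finite (evalCW e).V := by
  induction e with
  | vert => exact inferInstanceAs (Finite PUnit)
  | union a b iha ihb => exact inferInstanceAs (Finite ((evalCW a).V ⊕ (evalCW b).V))
  | relabel _ _ _ ih | join _ _ _ _ ih => exact ih

theorem nonempty_evalCW_V (e : CW n) : Nonempty (evalCW e).V := by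
  induction e with
  | vert => exact inferInstanceAs (Nonempty PUnit)
  | union a b iha ihb => exact inferInstanceAs (Nonempty ((evalCW a).V ⊕ (evalCW b).V))
  | relabel _ _ _ ih | join _ _ _ _ ih => exact ih

theorem Realizes.hasCliqueWidthLE {e : CW n} {G : SimpleGraph V} {lab : V → Fin n}
    (he : e.Realizes G Set.univ lab) : HasCliqueWidthLE G n := by
  obtain ⟨f, hinj, hrange, hadj, -⟩ := he
  have hbij : Function.Bijective f := ⟨hinj, Set.range_eq_univ.mp hrange⟩
  refine ⟨e, ⟨(Equiv.ofBijective f hbij).symm, fun {a b} => ?_⟩⟩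
  rw [hadj, Equiv.ofBijective_apply_symm_apply f hbij, Equiv.ofBijective_apply_symm_apply f hbij]

end CW

theorem cliqueWidth_le_of_finite_of_nonempty {V : Type} {G : SimpleGraph V} {n : ℕ}
    (h : Finite V → Nonempty V → HasCliqueWidthLE G n) : cliqueWidth G ≤ n := by
  by_cases hV : Finite V ∧ Nonempty V
  · exact Nat.sInf_le (h hV.1 hV.2)
  · have hempty : {m | HasCliqueWidthLE G m} = ∅ := by
      refine Set.eq_empty_of_forall_notMem fun m ⟨e, ⟨φ⟩⟩ => hV ⟨?_, ?_⟩
      · have := CW.finite_evalCW_V e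
        exact Finite.of_equiv _ φ.toEquiv.symm
      · exact (CW.nonempty_evalCW_V e).map φ.symm
    rw [cliqueWidth, hempty, Nat.sInf_empty]
    exact Nat.zero_le n

section UBubble

variable {V : Type} {G : SimpleGraph V} {row col : V → ℕ} {qr qs : V → Bool} {k r j : ℕ}

def bubblesFrom (row col : V → ℕ) (r j : ℕ) : Set V :=
  {u | r < row u ∨ row u = r ∧ j ≤ col u}

def bubble (row col : V → ℕ) (r j : ℕ) : Set V := {u | row u = r ∧ col u = j}

def colLabel (k j : ℕ) : Fin (k + 3) := ⟨min j k, by omega⟩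

def freshLabel (k : ℕ) : Fin (k + 3) := ⟨k, by omega⟩

def rightBubbleLabel (k : ℕ) : Fin (k + 3) := ⟨k + 1, by omega⟩

def bubbleLabel (k : ℕ) : Fin (k + 3) := ⟨k + 2, by omega⟩

/-- The labelling in force while the bubble `B r j` is being filled. -/
def ubmLabel (row col : V → ℕ) (qr : V → Bool) (k r j : ℕ) (u : V) : Fin (k + 3) :=
  if qr u ∧ row u = r ∧ col u = j then bubbleLabel k
  else if qr u ∧ row u = r ∧ col u = j + 1 then rightBubbleLabel k
  else colLabel k (col u)

-- For `j = 0` the truncated `j - 1 = 0` merely repeats `colLabel k j`.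
def nbrLabels (k j : ℕ) (s : Bool) : List (Fin (k + 3)) :=
  bubbleLabel k :: colLabel k j :: colLabel k (j - 1) :: if s then [rightBubbleLabel k] else []

theorem ubmLabel_ne_freshLabel {u : V} (hu : col u < k) :
    ubmLabel row col qr k r j u ≠ freshLabel k := by
  simp only [ubmLabel, colLabel, bubbleLabel, rightBubbleLabel, freshLabel]
  split_ifs <;> simp only [ne_eq, Fin.mk.injEq] <;> omega

theorem mem_nbrLabels {l : Fin (k + 3)} {s : Bool} :
    l ∈ nbrLabels k j s ↔
      l.val = k + 2 ∨ l.val = min j k ∨ l.val = min (j - 1) k ∨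
        (s = true ∧ l.val = k + 1) := by
  cases s <;> simp [nbrLabels, colLabel, bubbleLabel, rightBubbleLabel, Fin.ext_iff]

theorem freshLabel_not_mem_nbrLabels (hj : j < k) (s : Bool) :
    freshLabel k ∉ nbrLabels k j s := by
  simp only [mem_nbrLabels, freshLabel]
  omega

theorem val_ubmLabel (u : V) : (ubmLabel row col qr k r j u).val =
    if qr u ∧ row u = r ∧ col u = j then k + 2
    else if qr u ∧ row u = r ∧ col u = j + 1 then k + 1 else min (col u) k := by
  unfold ubmLabel
  split_ifs <;> rfl

theorem adj_iff_ubmLabel_mem_nbrLabels (h : IsUBubbleModel G row col qr qs)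
    (hcol : ∀ w, col w < k) {u v : V} (hv : v ∈ bubble row col r j)
    (hu : u ∈ bubblesFrom row col r j) (huv : u ≠ v) :
    G.Adj v u ↔ ubmLabel row col qr k r j u ∈ nbrLabels k j (qs v) := by
  obtain ⟨rfl, rfl⟩ := hv
  have hcu := hcol u
  have hcv := hcol v
  simp only [bubblesFrom, Set.mem_ofPred_eq] at hu
  rw [h v u, mem_nbrLabels, val_ubmLabel]
  simp only [ne_eq, huv.symm, not_false_eq_true, true_and, min_eq_left hcu.le,
    min_eq_left hcv.le, min_eq_left (hcv.le.trans' (Nat.sub_le _ 1))]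
  cases qr u <;> cases qs v <;> cases qs u <;> cases qr v <;>
    simp only [Bool.false_eq_true, false_and, and_false, true_and, and_true, if_false, or_false] <;>
    (try split_ifs) <;> omega

theorem ubmLabel_relabel_col {u : V} (hu : u ∈ bubblesFrom row col r (j + 1)) :
    Function.update id (bubbleLabel k) (rightBubbleLabel k)
      (Function.update id (rightBubbleLabel k) (colLabel k (j + 2))
        (ubmLabel row col qr k r (j + 1) u)) = ubmLabel row col qr k r j u := by
  simp only [bubblesFrom, Set.mem_ofPred_eq] at hu
  simp only [Function.update_apply, id, Fin.ext_iff, val_ubmLabel, colLabel, rightBubbleLabel,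
    bubbleLabel, apply_ite Fin.val]
  cases qr u <;> simp only [Bool.false_eq_true, false_and, true_and, if_false] <;>
    split_ifs <;> omega

theorem ubmLabel_relabel_row {u : V} (hu : u ∈ bubblesFrom row col (r + 1) 0) :
    Function.update id (bubbleLabel k) (colLabel k 0)
      (Function.update id (rightBubbleLabel k) (colLabel k 1)
        (ubmLabel row col qr k (r + 1) 0 u)) = ubmLabel row col qr k r k u := by
  simp only [bubblesFrom, Set.mem_ofPred_eq] at hu
  simp only [Function.update_apply, id, Fin.ext_iff, val_ubmLabel, colLabel, rightBubbleLabel,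
    bubbleLabel, apply_ite Fin.val]
  cases qr u <;> simp only [Bool.false_eq_true, false_and, true_and, if_false] <;>
    split_ifs <;> omega

theorem bubblesFrom_eq_union_bubble :
    bubblesFrom row col r j = bubblesFrom row col r (j + 1) ∪ bubble row col r j := by
  ext u
  simp only [bubblesFrom, bubble, Set.mem_union, Set.mem_ofPred_eq]
  omega

theorem bubblesFrom_eq_bubblesFrom_succ_zero (hcol : ∀ w, col w < k) :
    bubblesFrom row col r k = bubblesFrom row col (r + 1) 0 := by
  ext u
  have := hcol u
  simp only [bubblesFrom, Set.mem_ofPred_eq]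
  omega

theorem bubblesFrom_eq_empty {R : ℕ} (hR : ∀ u, row u < R) : bubblesFrom row col R 0 = ∅ :=
  Set.eq_empty_of_forall_notMem fun u hu => by
    have := hR u
    simp only [bubblesFrom, Set.mem_ofPred_eq] at hu
    omega

theorem bubblesFrom_zero_zero : bubblesFrom row col 0 0 = Set.univ :=
  Set.eq_univ_of_forall fun u => by simp [bubblesFrom]; omega

variable [Finite V]

theorem buildable_bubblesFrom_of_union_bubble (h : IsUBubbleModel G row col qr qs)
    (hcol : ∀ w, col w < k)
    (hS : CW.Buildable (k + 3) G (bubblesFrom row col r (j + 1)) (ubmLabel row col qr k r j)) :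
    CW.Buildable (k + 3) G (bubblesFrom row col r j) (ubmLabel row col qr k r j) := by
  rw [bubblesFrom_eq_union_bubble]
  refine Set.Finite.induction_on_subset (motive := fun T _ =>
      CW.Buildable (k + 3) G (bubblesFrom row col r (j + 1) ∪ T) (ubmLabel row col qr k r j))
    _ (Set.toFinite _) (by simpa using hS) fun {v T} hv hT hvT ih => ?_
  have hsub : bubblesFrom row col r (j + 1) ∪ T ⊆ bubblesFrom row col r j := by
    rw [bubblesFrom_eq_union_bubble (j := j)]
    exact Set.union_subset_union_right _ hT
  have hv_new : v ∉ bubblesFrom row col r (j + 1) ∪ T := by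
    rintro (hva | hvT')
    · simp only [bubblesFrom, Set.mem_ofPred_eq, hv.1, hv.2] at hva
      omega
    · exact hvT hvT'
  rw [Set.union_insert]
  exact ih.insert hv_new (fun u _ => ubmLabel_ne_freshLabel (hcol u))
    (freshLabel_not_mem_nbrLabels (hv.2 ▸ hcol v) (qs v))
    fun u hu =>
      adj_iff_ubmLabel_mem_nbrLabels h hcol hv (hsub hu) (ne_of_mem_of_not_mem hu hv_new)

theorem buildable_bubblesFrom_of_succ_col (h : IsUBubbleModel G row col qr qs)
    (hcol : ∀ w, col w < k)
    (hS : CW.Buildable (k + 3) G (bubblesFrom row col r (j + 1))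
      (ubmLabel row col qr k r (j + 1))) :
    CW.Buildable (k + 3) G (bubblesFrom row col r j) (ubmLabel row col qr k r j) :=
  buildable_bubblesFrom_of_union_bubble h hcol
    (((hS.relabel _ _).relabel _ _).congr fun _ hu => ubmLabel_relabel_col hu)

theorem buildable_bubblesFrom_zero_of_succ_row (h : IsUBubbleModel G row col qr qs)
    (hcol : ∀ w, col w < k)
    (hS : CW.Buildable (k + 3) G (bubblesFrom row col (r + 1) 0)
      (ubmLabel row col qr k (r + 1) 0)) :
    CW.Buildable (k + 3) G (bubblesFrom row col r 0) (ubmLabel row col qr k r 0) := by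
  have hstart : CW.Buildable (k + 3) G (bubblesFrom row col r k) (ubmLabel row col qr k r k) := by
    rw [bubblesFrom_eq_bubblesFrom_succ_zero hcol]
    exact ((hS.relabel _ _).relabel _ _).congr fun _ hu => ubmLabel_relabel_row hu
  suffices ∀ j ≤ k,
      CW.Buildable (k + 3) G (bubblesFrom row col r j) (ubmLabel row col qr k r j) from
    this 0 k.zero_le
  intro j hj
  induction hj using Nat.decreasingInduction with
  | self => exact hstart
  | of_succ j _ ih => exact buildable_bubblesFrom_of_succ_col h hcol ih

theorem hasCliqueWidthLE_of_isUBubbleModel [Nonempty V] (h : IsUBubbleModel G row col qr qs)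
    (hcol : ∀ w, col w < k) : HasCliqueWidthLE G (k + 3) := by
  obtain ⟨R, hR⟩ := (Set.finite_range row).bddAbove
  have hbuild : ∀ r ≤ R + 1,
      CW.Buildable (k + 3) G (bubblesFrom row col r 0) (ubmLabel row col qr k r 0) := by
    intro r hr
    induction hr using Nat.decreasingInduction with
    | self => exact Or.inl (bubblesFrom_eq_empty fun u => Nat.lt_succ_of_le (hR ⟨u, rfl⟩))
    | of_succ r _ ih => exact buildable_bubblesFrom_zero_of_succ_row h hcol ih
  rcases hbuild 0 (R + 1).zero_le with hempty | ⟨e, he⟩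
  · exact absurd (bubblesFrom_zero_zero.symm.trans hempty) Set.univ_nonempty.ne_empty
  · exact (bubblesFrom_zero_zero (row := row) ▸ he).hasCliqueWidthLE

end UBubble

/-- If a graph admits a U-bubble model with k columns, then its clique-width
is at most k + 3. -/
theorem ubm_cliqueWidth_le_columns_add_three {V : Type} (G : SimpleGraph V)
    (row col : V → ℕ) (qr qs : V → Bool)
    (h : IsUBubbleModel G row col qr qs) (k : ℕ) (hcol : ∀ v, col v < k) :
    cliqueWidth G ≤ k + 3 :=
  cliqueWidth_le_of_finite_of_nonempty fun _ _ => hasCliqueWidthLE_of_isUBubbleModel h hcol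
end

section
/- Let G be a graph admitting a U-bubble model. Then cwd(G) ≤ 2α(G) + 3, where α(G) is the independence number of G. -/
/-- The independence number of a graph. -/
noncomputable def indepNum {V : Type*} (G : SimpleGraph V) : ℕ := Gᶜ.cliqueNum

/-!
Sweep the vertices row by row from the top, each row from right to left. When `v` is inserted,
its earlier neighbours are its whole column, the whole column to its left and, if `qs v`, the
`qr`-vertices of its own row in the column to its right. So with `K` occupied columns, `K + 3`
labels suffice: one per column, two that hold the `qr`-vertices of the current row in the
current and the next column (told apart by parity), and one for the newcomer. Every other column
contributes a vertex to an independent set, so `K ≤ 2 α(G)`.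
-/

section CliqueWidthExpressions

open Finset SimpleGraph

theorem evalCW_nonempty {N : ℕ} (e : CW N) : Nonempty (evalCW e).V := by
  induction e with
  | vert => exact ⟨PUnit.unit⟩
  | union a _ iha => exact ⟨Sum.inl iha.some⟩
  | relabel _ _ _ ih => exact ih
  | join _ _ _ _ ih => exact ih

theorem cliqueWidth_eq_zero_of_isEmpty {V : Type} [IsEmpty V] (G : SimpleGraph V) :
    cliqueWidth G = 0 := by
  have : {k | HasCliqueWidthLE G k} = ∅ := Set.eq_empty_of_forall_notMem fun _ ⟨e, ⟨φ⟩⟩ =>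
    IsEmpty.false (φ.symm (evalCW_nonempty e).some)
  simp [cliqueWidth, this]

theorem evalCW_union_G {N : ℕ} (a b : CW N) :
    (evalCW (.union a b)).G = (evalCW a).G ⊕g (evalCW b).G := by
  ext (x | x) (y | y) <;> simp [evalCW, sumRel, adj_comm (evalCW a).G, adj_comm (evalCW b).G]
  exacts [Adj.ne, Adj.ne]

/-- Labels are taken in `ℕ` (and forced below `N`) so that label arithmetic is plain `ℕ`
arithmetic. -/
def CWRealizable (N : ℕ) {W : Type} (H : SimpleGraph W) (f : W → ℕ) : Prop :=
  ∃ e : CW N, ∃ φ : (evalCW e).G ≃g H, ∀ x, ((evalCW e).lab x : ℕ) = f (φ x)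

namespace CWRealizable

variable {N : ℕ} {W W' : Type} {H : SimpleGraph W} {H' : SimpleGraph W'} {f : W → ℕ}

theorem lt (h : CWRealizable N H f) (x : W) : f x < N := by
  obtain ⟨e, φ, hlab⟩ := h
  simpa [hlab] using ((evalCW e).lab (φ.symm x)).isLt

theorem hasCliqueWidthLE (h : CWRealizable N H f) : HasCliqueWidthLE H N :=
  let ⟨e, φ, _⟩ := h
  ⟨e, ⟨φ.symm⟩⟩

theorem iso (h : CWRealizable N H f) (ψ : H ≃g H') : CWRealizable N H' (f ∘ ψ.symm) :=
  let ⟨e, φ, hlab⟩ := h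
  ⟨e, φ.trans ψ, fun x => by simp [hlab]⟩

theorem of_unique [Unique W] (hf : f default < N) : CWRealizable N H f :=
  ⟨.vert ⟨f default, hf⟩, ⟨Equiv.ofUnique PUnit W,
    iff_of_false (fun hxy => H.ne_of_adj hxy (Subsingleton.elim _ _)) (fun h => False.elim h)⟩,
    fun _ => congrArg f (Subsingleton.elim _ _)⟩

theorem sum {f' : W' → ℕ} (h : CWRealizable N H f) (h' : CWRealizable N H' f') :
    CWRealizable N (H ⊕g H') (Sum.elim f f') := by
  obtain ⟨e, φ, hlab⟩ := h
  obtain ⟨e', φ', hlab'⟩ := h'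
  let ψ : (evalCW (.union e e')).G ≃g (evalCW e).G ⊕g (evalCW e').G :=
    ⟨Equiv.refl _, by rw [evalCW_union_G]; rfl⟩
  refine ⟨.union e e', ψ.trans (Iso.sumCongr φ φ'), ?_⟩
  rintro (x | x)
  exacts [hlab x, hlab' x]

theorem relabel {i j : ℕ} (h : CWRealizable N H f) (hi : i < N) (hj : j < N) :
    CWRealizable N H (fun x => if f x = i then j else f x) := by
  obtain ⟨e, φ, hlab⟩ := h
  refine ⟨.relabel ⟨i, hi⟩ ⟨j, hj⟩ e, φ, fun (x : (evalCW e).V) => ?_⟩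
  show ((if (evalCW e).lab x = ⟨i, hi⟩ then ⟨j, hj⟩ else (evalCW e).lab x : Fin N) : ℕ) =
    if f (φ x) = i then j else f (φ x)
  rw [← hlab x]
  split_ifs <;> simp_all [Fin.ext_iff]

theorem join {i j : ℕ} (h : CWRealizable N H f) (hi : i < N) (hj : j < N) (hij : i ≠ j) :
    CWRealizable N (H ⊔ fromRel (fun x y => f x = i ∧ f y = j)) f := by
  obtain ⟨e, φ, hlab⟩ := h
  refine ⟨.join ⟨i, hi⟩ ⟨j, hj⟩ (by simpa [Fin.ext_iff] using hij) e,
    ⟨φ.toEquiv, fun {x y} => ?_⟩, hlab⟩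
  revert x y
  show ∀ x y : (evalCW e).V, (H ⊔ fromRel fun x y => f x = i ∧ f y = j).Adj (φ x) (φ y) ↔
    ((evalCW e).G ⊔ fromRel (fun x y =>
    (evalCW e).lab x = ⟨i, hi⟩ ∧ (evalCW e).lab y = ⟨j, hj⟩)).Adj x y
  intro x y
  simp [Fin.ext_iff, hlab, φ.map_adj_iff]

theorem joinAll {i : ℕ} (h : CWRealizable N H f) (hi : i < N) (J : Finset ℕ)
    (hJ : ∀ j ∈ J, j < N ∧ j ≠ i) :
    CWRealizable N (H ⊔ fromRel (fun x y => f x = i ∧ f y ∈ J)) f := by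
  classical
  induction J using Finset.induction_on with
  | empty =>
    convert h using 1
    ext
    simp
  | insert j J _ ih =>
    have hj := hJ j (mem_insert_self j J)
    have := (ih fun j' hj' => hJ j' (mem_insert_of_mem hj')).join hi hj.1 hj.2.symm
    convert this using 1
    ext x y
    simp only [sup_adj, fromRel_adj, mem_insert]
    tauto

end CWRealizable

theorem CWRealizable.induce_insert {V : Type} {G : SimpleGraph V} {s : Set V} {v : V}
    {f : V → ℕ} {N A : ℕ} (h : CWRealizable N (G.induce s) (fun u => f u)) (hv : v ∉ s)
    (hA : A < N) (hfA : ∀ u ∈ s, f u ≠ A) (hfv : f v < N)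
    (hhom : ∀ u ∈ s, ∀ u' ∈ s, f u = f u' → (G.Adj v u ↔ G.Adj v u')) :
    CWRealizable N (G.induce (insert v s)) (fun u => f u) := by
  classical
  set J := (range N).filter (fun l => ∃ u ∈ s, f u = l ∧ G.Adj v u)
  have hJ : ∀ u ∈ s, f u ∈ J ↔ G.Adj v u := fun u hu => by
    refine ⟨fun hl => ?_, fun hadj => mem_filter.2 ⟨mem_range.2 (h.lt ⟨u, hu⟩), u, hu, rfl, hadj⟩⟩
    obtain ⟨u', hu', hfu', hadj⟩ := (mem_filter.1 hl).2
    exact (hhom u' hu' u hu hfu').1 hadj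
  have hJA : ∀ j ∈ J, j < N ∧ j ≠ A := fun j hj => by
    obtain ⟨hjN, u, hu, rfl, -⟩ := mem_filter.1 hj
    exact ⟨mem_range.1 hjN, hfA u hu⟩
  have hjoined :=
    ((h.sum (of_unique (H := (⊥ : SimpleGraph PUnit)) (f := fun _ => A) hA)).joinAll hA J hJA)
      |>.relabel hA hfv
  let ψ : ((G.induce s ⊕g (⊥ : SimpleGraph PUnit)) ⊔ fromRel fun x y =>
      Sum.elim (fun u : s => f u) (fun _ => A) x = A ∧
        Sum.elim (fun u : s => f u) (fun _ => A) y ∈ J) ≃g G.induce (insert v s) :=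
    ⟨(Equiv.Set.insert hv).symm, fun {x y} => by
      rcases x with x | ⟨⟩ <;> rcases y with y | ⟨⟩ <;> simp [hfA, hJ, adj_comm G _ v]⟩
  convert hjoined.iso ψ using 1
  funext ⟨u, hu⟩
  rcases hu with rfl | hu
  · simp [ψ]
  · simp [ψ, Equiv.Set.insert_apply_right hv ⟨u, hu⟩, hfA u hu]

end CliqueWidthExpressions

open Finset

section ColumnRank

variable {V : Type} [Fintype V] (col : V → ℕ)

def colRank (u : V) : ℕ := #((univ.image col).filter (· < col u))

variable {col} {u v : V}

theorem colRank_lt_card (u : V) : colRank col u < #(univ.image col) :=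
  card_lt_card <| (ssubset_iff_of_subset (filter_subset _ _)).2
    ⟨col u, mem_image_of_mem col (mem_univ u), by simp⟩

theorem colRank_le_colRank (h : col u ≤ col v) : colRank col u ≤ colRank col v :=
  card_le_card fun c hc => by
    simp only [mem_filter] at hc ⊢
    exact ⟨hc.1, hc.2.trans_le h⟩

theorem colRank_lt_colRank (h : col u < col v) : colRank col u < colRank col v :=
  card_lt_card <| (ssubset_iff_of_subset fun c hc => by
      simp only [mem_filter] at hc ⊢
      exact ⟨hc.1, hc.2.trans h⟩).2
    ⟨col u, by simp [h], by simp⟩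

theorem colRank_eq_colRank_iff : colRank col u = colRank col v ↔ col u = col v := by
  refine ⟨fun h => ?_, fun h => by simp [colRank, h]⟩
  rcases lt_trichotomy (col u) (col v) with hlt | heq | hgt
  · exact absurd h (colRank_lt_colRank hlt).ne
  · exact heq
  · exact absurd h (colRank_lt_colRank hgt).ne'

theorem colRank_succ (h : col u + 1 = col v) : colRank col u + 1 = colRank col v := by
  have : (univ.image col).filter (· < col v) =
      insert (col u) ((univ.image col).filter (· < col u)) := by
    ext c
    simp only [mem_filter, mem_insert, mem_image, mem_univ, true_and]
    constructor
    · rintro ⟨hc, hlt⟩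
      rcases Nat.lt_or_ge c (col u) with h' | h'
      exacts [Or.inr ⟨hc, h'⟩, Or.inl (by omega)]
    · rintro (rfl | ⟨hc, hlt⟩)
      exacts [⟨⟨u, rfl⟩, by omega⟩, ⟨hc, by omega⟩]
  rw [colRank, colRank, this, card_insert_of_notMem (by simp)]

theorem exists_colRank_eq {i : ℕ} (hi : i < #(univ.image col)) : ∃ u, colRank col u = i := by
  have hinj : Set.InjOn (fun c => #((univ.image col).filter (· < c))) (univ.image col) := by
    intro c hc d hd hcd
    obtain ⟨u, -, rfl⟩ := mem_image.1 hc
    obtain ⟨v, -, rfl⟩ := mem_image.1 hd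
    exact colRank_eq_colRank_iff.1 hcd
  have himage : univ.image (colRank col) = range #(univ.image col) := by
    refine eq_of_subset_of_card_le (fun r hr => ?_) ?_
    · obtain ⟨u, -, rfl⟩ := mem_image.1 hr
      exact mem_range.2 (colRank_lt_card u)
    · rw [card_range, ← card_image_of_injOn hinj, image_image]
      rfl
  have : i ∈ univ.image (colRank col) := himage ▸ mem_range.2 hi
  simpa using this

end ColumnRank

namespace IsUBubbleModel

variable {V : Type} [Fintype V] {G : SimpleGraph V} {row col : V → ℕ} {qr qs : V → Bool}

theorem colRank_le_succ_of_adj (h : IsUBubbleModel G row col qr qs) {u v : V}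
    (huv : G.Adj u v) : colRank col u ≤ colRank col v + 1 := by
  rcases (h u v).1 huv with ⟨-, hc | ⟨hc, -⟩ | ⟨hc, -⟩⟩
  · exact (colRank_eq_colRank_iff.2 hc).le.trans (Nat.le_succ _)
  · have := colRank_succ hc
    omega
  · have := colRank_succ hc
    omega

/-- Picking one vertex in every other column gives an independent set. -/
theorem card_image_col_le_two_mul_indepNum (h : IsUBubbleModel G row col qr qs) :
    #(univ.image col) ≤ 2 * indepNum G := by
  classical
  set K := #(univ.image col)
  choose rep hrep using fun i : Fin K => exists_colRank_eq (col := col) i.isLt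
  let pick : Fin ((K + 1) / 2) → V := fun j => rep ⟨2 * j, by omega⟩
  have hpick : ∀ j, colRank col (pick j) = 2 * j := fun j => hrep _
  have hinj : Function.Injective pick := fun j j' hjj' => by
    have := congrArg (colRank col) hjj'
    rw [hpick, hpick] at this
    exact Fin.ext (by omega)
  have hindep : Gᶜ.IsClique (univ.image pick : Set V) := by
    simp only [coe_image, coe_univ, Set.image_univ]
    rintro _ ⟨j, rfl⟩ _ ⟨j', rfl⟩ hne
    refine (SimpleGraph.compl_adj G _ _).2 ⟨hne, fun hadj => ?_⟩
    have h₁ := h.colRank_le_succ_of_adj hadj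
    have h₂ := h.colRank_le_succ_of_adj hadj.symm
    rw [hpick, hpick] at h₁ h₂
    exact hne (congrArg pick (Fin.ext (by omega)))
  calc K ≤ 2 * ((K + 1) / 2) := by omega
    _ = 2 * #(univ.image pick) := by
      rw [card_image_of_injective _ hinj, card_univ, Fintype.card_fin]
    _ ≤ 2 * indepNum G := Nat.mul_le_mul_left 2 (hindep.card_le_cliqueNum)

end IsUBubbleModel

section Sweep

variable {V : Type} {G : SimpleGraph V} {row col : V → ℕ} {qr qs : V → Bool}

def SweepLE (row col : V → ℕ) (u v : V) : Prop :=
  row v < row u ∨ row u = row v ∧ col v ≤ col u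

theorem IsUBubbleModel.adj_iff_of_sweepLE (h : IsUBubbleModel G row col qr qs) {u v : V}
    (hne : u ≠ v) (huv : SweepLE row col u v) :
    G.Adj v u ↔ col u = col v ∨ col u + 1 = col v ∨
      (col u = col v + 1 ∧ row u = row v ∧ qr u = true ∧ qs v = true) := by
  rw [h v u]
  unfold SweepLE at huv
  constructor
  · rintro ⟨-, hc | ⟨hc, hr | ⟨hr, hs, hq⟩⟩ | ⟨hc, hr | ⟨hr, hs, hq⟩⟩⟩
    all_goals first | omega | exact Or.inr (Or.inr ⟨hc.symm, hr.symm, hq, hs⟩)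
  · rintro (hc | hc | ⟨hc, hr, hq, hs⟩)
    · exact ⟨hne.symm, Or.inl hc.symm⟩
    · exact ⟨hne.symm, Or.inr (Or.inr ⟨hc, by omega⟩)⟩
    · exact ⟨hne.symm, Or.inr (Or.inl ⟨hc.symm, Or.inr ⟨hr.symm, hs, hq⟩⟩)⟩

variable [Fintype V]

theorem SweepLE.colRank_le {u v : V} (h : SweepLE row col u v) :
    row v < row u ∨ row u = row v ∧ colRank col v ≤ colRank col u := by
  rcases h with h | ⟨h, h'⟩
  exacts [Or.inl h, Or.inr ⟨h, colRank_le_colRank h'⟩]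

/-- The labelling when the sweep is at row `r`, compressed column `c`: compressed column `i` has
label `i`, except that the `qr`-vertices of row `r` in columns `c` and `c + 1` are held under
`K + (column mod 2)`, since later vertices of row `r` may see them through the `(qs, qr)` rule.
Label `K + 2` stays free for the vertex being inserted. -/
def stageLabel (row col : V → ℕ) (qr : V → Bool) (r c : ℕ) (u : V) : ℕ :=
  if row u = r ∧ qr u = true ∧ colRank col u ≤ c + 1 then #(univ.image col) + colRank col u % 2
  else colRank col u

theorem stageLabel_lt (r c : ℕ) (u : V) :
    stageLabel row col qr r c u < #(univ.image col) + 2 := by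
  have := colRank_lt_card (col := col) u
  unfold stageLabel
  split_ifs <;> omega

theorem IsUBubbleModel.adj_congr_of_stageLabel_eq (h : IsUBubbleModel G row col qr qs)
    {u u' v : V} (hu : SweepLE row col u v) (hu' : SweepLE row col u' v) (hne : u ≠ v)
    (hne' : u' ≠ v)
    (heq : stageLabel row col qr (row v) (colRank col v) u =
      stageLabel row col qr (row v) (colRank col v) u') :
    G.Adj v u ↔ G.Adj v u' := by
  -- Equal labels force the same column and the same held status, which determine adjacency.
  set held : V → Prop := fun x => row x = row v ∧ qr x = true ∧ colRank col x ≤ colRank col v + 1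
  have hheld : ∀ x, col x = col v + 1 →
      (row x = row v ∧ qr x = true ∧ qs v = true ↔ held x ∧ qs v = true) := fun x hx => by
    have hle : colRank col x ≤ colRank col v + 1 := (colRank_succ hx.symm).ge
    simp [held, hle, and_assoc]
  have hsame : colRank col u = colRank col u' ∧ (held u ↔ held u') := by
    have := colRank_lt_card (col := col) u
    have := colRank_lt_card (col := col) u'
    have := hu.colRank_le
    have := hu'.colRank_le
    unfold stageLabel at heq
    simp only [held]
    cases hq : qr u <;> cases hq' : qr u' <;>
      simp only [hq, hq', Bool.false_eq_true, false_and, and_false, if_false, true_and,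
        and_true, false_iff, iff_false] at heq ⊢ <;>
      (try split_ifs at heq) <;> omega
  have hcol := colRank_eq_colRank_iff.1 hsame.1
  rw [h.adj_iff_of_sweepLE hne hu, h.adj_iff_of_sweepLE hne' hu', hcol]
  refine or_congr_right (or_congr_right (and_congr_right fun hc => ?_))
  rw [hheld u (hcol.trans hc), hheld u' hc, hsame.2]

theorem CWRealizable.stageLabel_next {N : ℕ} {s : Set V} {H : SimpleGraph s} {v w : V}
    (hN : #(univ.image col) + 3 ≤ N) (hs : ∀ u ∈ s, SweepLE row col u v)
    (hvw : SweepLE row col v w)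
    (h : CWRealizable N H fun u => stageLabel row col qr (row v) (colRank col v) u) :
    CWRealizable N H fun u => stageLabel row col qr (row w) (colRank col w) u := by
  set K := #(univ.image col)
  set c := colRank col v
  have hc := colRank_lt_card (col := col) v
  -- Release the held vertices of columns `c + 1` and `c` unless `w` still holds them;
  -- relabelling a label to itself changes nothing.
  have hnext := (h.relabel (i := K + (c + 1) % 2)
    (j := if row w = row v ∧ colRank col w = c then K + (c + 1) % 2 else c + 1)
    (by omega) (by split_ifs <;> omega)).relabel (i := K + c % 2)
    (j := if row w = row v ∧ c ≤ colRank col w + 1 then K + c % 2 else c)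
    (by omega) (by split_ifs <;> omega)
  convert hnext using 2 with u
  have hu := (hs u u.2).colRank_le
  have hvw := hvw.colRank_le
  have := colRank_lt_card (col := col) u
  have := colRank_lt_card (col := col) w
  unfold stageLabel
  cases qr u <;> simp only [Bool.false_eq_true, false_and, and_false, if_false, true_and] <;>
    split_ifs <;> omega

end Sweep

namespace IsUBubbleModel

variable {V : Type} [Fintype V] {G : SimpleGraph V} {row col : V → ℕ} {qr qs : V → Bool}

/-- The list holds the inserted vertices, the last one first. -/
theorem cwRealizable_sweep (h : IsUBubbleModel G row col qr qs) {N : ℕ}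
    (hN : #(univ.image col) + 3 ≤ N) (L : List V) (v : V)
    (hsorted : (v :: L).Pairwise fun x y => SweepLE row col y x) (hnodup : (v :: L).Nodup) :
    CWRealizable N (G.induce {u | u ∈ v :: L})
      fun u => stageLabel row col qr (row v) (colRank col v) u := by
  have hlt : ∀ r c u, stageLabel row col qr r c u < N := fun r c u =>
    (stageLabel_lt r c u).trans_le (by omega)
  induction L generalizing v with
  | nil =>
    have hsingleton : {u | u ∈ [v]} = {v} := by ext; simp
    rw [hsingleton]
    exact CWRealizable.of_unique (hlt _ _ v)
  | cons w L ih =>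
    obtain ⟨hbefore, hsorted⟩ := List.pairwise_cons.1 hsorted
    obtain ⟨hv, hnodup⟩ := List.nodup_cons.1 hnodup
    have hw : ∀ u ∈ w :: L, SweepLE row col u w := by
      simp only [List.mem_cons, forall_eq_or_imp]
      exact ⟨Or.inr ⟨rfl, le_rfl⟩, (List.pairwise_cons.1 hsorted).1⟩
    have hinsert : {u | u ∈ v :: w :: L} = insert v {u | u ∈ w :: L} := by ext; simp
    rw [hinsert]
    exact ((ih w hsorted hnodup).stageLabel_next hN hw (hbefore w List.mem_cons_self))
      |>.induce_insert hv (A := #(univ.image col) + 2) (by omega)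
        (fun u _ => (stageLabel_lt _ _ u).ne) (hlt _ _ v)
        (fun u hu u' hu' => h.adj_congr_of_stageLabel_eq (hbefore u hu) (hbefore u' hu')
          (ne_of_mem_of_not_mem hu hv) (ne_of_mem_of_not_mem hu' hv))

theorem hasCliqueWidthLE [Nonempty V] (h : IsUBubbleModel G row col qr qs) {N : ℕ}
    (hN : #(univ.image col) + 3 ≤ N) : HasCliqueWidthLE G N := by
  classical
  let sweepLE : V → V → Bool := fun x y => decide (SweepLE row col y x)
  have hsorted := List.pairwise_mergeSort (le := sweepLE)
    (fun _ _ _ => by simp only [sweepLE, decide_eq_true_eq]; unfold SweepLE; omega)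
    (fun _ _ => by simp only [sweepLE, Bool.or_eq_true, decide_eq_true_eq]; unfold SweepLE; omega)
    univ.toList
  have hnodup := (List.mergeSort_perm univ.toList sweepLE).nodup_iff.2 (nodup_toList _)
  obtain ⟨v, L, hL⟩ : ∃ v L, univ.toList.mergeSort sweepLE = v :: L :=
    List.exists_cons_of_ne_nil (List.ne_nil_of_mem (List.mem_mergeSort.2
      (mem_toList.2 (mem_univ (Classical.arbitrary V)))))
  have huniv : {u | u ∈ v :: L} = Set.univ := by
    ext u
    simp [← hL, List.mem_mergeSort]
  rw [hL] at hsorted hnodup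
  have := h.cwRealizable_sweep hN L v (by simpa [sweepLE] using hsorted) hnodup
  rw [huniv] at this
  exact (this.iso (G.induceUnivIso)).hasCliqueWidthLE

end IsUBubbleModel

/-- If a graph admits a U-bubble model, then its clique-width is at most
2·α(G) + 3, where α(G) is the independence number. -/
theorem ubm_cliqueWidth_le_two_indepNum_add_three {V : Type} [Fintype V]
    (G : SimpleGraph V) (row col : V → ℕ) (qr qs : V → Bool)
    (h : IsUBubbleModel G row col qr qs) :
    cliqueWidth G ≤ 2 * indepNum G + 3 := by
  rcases isEmpty_or_nonempty V with hV | hV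
  · simp [cliqueWidth_eq_zero_of_isEmpty]
  · exact Nat.sInf_le (h.hasCliqueWidthLE (by have := h.card_image_col_le_two_mul_indepNum; omega))
end

section
/- Let G be a graph given by a U-bubble model B, and let φ_B(G) be the group number of G in B. Then φ_B(G) ≤ ω(G) − 1, where ω(G) is the clique number of G. -/
/-- The group of a vertex w in its column of a U-bubble model: its column
together with its neighbourhood in the following column. Two vertices of the
same column are in the same group iff these data coincide. -/
def group {V : Type*} (G : SimpleGraph V) (col : V → ℕ) (w : V) : ℕ × Set V :=
  (col w, {x | col x = col w + 1 ∧ G.Adj w x})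

/-- The number of groups represented in a vertex set S. -/
noncomputable def groupCount {V : Type*} (G : SimpleGraph V) (col : V → ℕ)
    (S : Set V) : ℕ :=
  (group G col '' S).ncard

/-- The group number of a vertex v in a U-bubble model: the larger of the
numbers of groups met by N(v) intersected with the vertices of the previous
column strictly below v and of v's column strictly above v, together with
either A = B_{i,j-1}^{*+} ∪ B_{i,j}^{+*} or A = B_{i,j}. -/
noncomputable def groupNumber {V : Type*} (G : SimpleGraph V)
    (row col : V → ℕ) (qr qs : V → Bool) (v : V) : ℕ :=
  max
    (groupCount G col (G.neighborSet v ∩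
      ({w | col w + 1 = col v ∧ row v < row w} ∪
       {w | col w = col v ∧ row w < row v} ∪
       ({w | col w + 1 = col v ∧ row w = row v ∧ qs w = true} ∪
        {w | col w = col v ∧ row w = row v ∧ qr w = true}))))
    (groupCount G col (G.neighborSet v ∩
      ({w | col w + 1 = col v ∧ row v < row w} ∪
       {w | col w = col v ∧ row w < row v} ∪
       {w | col w = col v ∧ row w = row v})))

/-- The group number of a graph G in a U-bubble model B. -/
noncomputable def graphGroupNumber {V : Type*} (G : SimpleGraph V)
    (row col : V → ℕ) (qr qs : V → Bool) : ℕ :=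
  ⨆ v, groupNumber G row col qr qs v

namespace SimpleGraph

variable {V : Type*} (G : SimpleGraph V)

theorem ncard_neighborSet_inter_le_cliqueNum_sub_one [Finite V] (v : V) {S : Set V}
    (hS : G.IsClique S) : (G.neighborSet v ∩ S).ncard ≤ G.cliqueNum - 1 := by
  set T := G.neighborSet v ∩ S
  have hvT : v ∉ T := fun hv => G.irrefl hv.1
  have hclique : G.IsClique (insert v T) :=
    isClique_insert.2 ⟨hS.subset Set.inter_subset_right, fun _ hw _ => hw.1⟩
  have hcard : (insert v T).ncard ≤ G.cliqueNum := by
    rw [Set.ncard_eq_toFinset_card _ (Set.toFinite _)]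
    exact IsClique.card_le_cliqueNum (tc := by simpa using hclique)
  rw [Set.ncard_insert_of_notMem hvT] at hcard
  omega

end SimpleGraph

theorem groupCount_le_ncard {V : Type*} [Finite V] (G : SimpleGraph V) (col : V → ℕ) (S : Set V) :
    groupCount G col S ≤ S.ncard :=
  Set.ncard_image_le S.toFinite

/-- The vertices of the bubbles `B_{i',j-1}` with `i' > i` and `B_{i',j}` with `i' < i`, where `v`
lies in `B_{i,j}`. -/
def precedingBubbles {V : Type*} (row col : V → ℕ) (v : V) : Set V :=
  {w | col w + 1 = col v ∧ row v < row w} ∪ {w | col w = col v ∧ row w < row v}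

namespace IsUBubbleModel

variable {V : Type*} {G : SimpleGraph V} {row col : V → ℕ} {qr qs : V → Bool}

theorem isClique_precedingBubbles_union_closedEnds (h : IsUBubbleModel G row col qr qs) (v : V) :
    G.IsClique (precedingBubbles row col v ∪
      ({w | col w + 1 = col v ∧ row w = row v ∧ qs w = true} ∪
        {w | col w = col v ∧ row w = row v ∧ qr w = true})) := by
  intro a ha b hb hab
  rw [h]
  simp only [precedingBubbles, Set.mem_union, Set.mem_ofPred_eq] at ha hb
  -- Across the two columns the rows are strictly ordered, except for a pair in row `row v`,
  -- whose ends are closed towards each other.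
  grind

theorem isClique_precedingBubbles_union_bubble (h : IsUBubbleModel G row col qr qs) (v : V) :
    G.IsClique (precedingBubbles row col v ∪ {w | col w = col v ∧ row w = row v}) := by
  intro a ha b hb hab
  rw [h]
  simp only [precedingBubbles, Set.mem_union, Set.mem_ofPred_eq] at ha hb
  grind

end IsUBubbleModel

/-- The group number of a graph in a U-bubble model is at most ω(G) - 1. -/
theorem groupNumber_le_cliqueNum_sub_one {V : Type*} [Fintype V]
    (G : SimpleGraph V) (row col : V → ℕ) (qr qs : V → Bool)
    (h : IsUBubbleModel G row col qr qs) :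
    graphGroupNumber G row col qr qs ≤ G.cliqueNum - 1 := by
  refine ciSup_le' fun v => max_le ?_ ?_
  · exact (groupCount_le_ncard G col _).trans <|
      G.ncard_neighborSet_inter_le_cliqueNum_sub_one v
        (h.isClique_precedingBubbles_union_closedEnds v)
  · exact (groupCount_le_ncard G col _).trans <|
      G.ncard_neighborSet_inter_le_cliqueNum_sub_one v
        (h.isClique_precedingBubbles_union_bubble v)
end

section
/- Let G be a graph given by a U-bubble model whose light columns C_0, C_1, …, C_p partition the model into heavy parts B̂_1,…,B̂_p (B̂_j spanning from light column C_{j−1} to C_j). If S = S_0 ∪ ⋯ ∪ S_p is a fixed cut of the light columns, then mcs(G, S) = Σ_{j=1}^{p} mcs(G(B̂_j), S_{j−1} ∪ S_j) − Σ_{j=1}^{p−1} |S_j|·|C_j \ S_j|, where mcs(H, T) denotes the maximum size of a cut of H agreeing with T. -/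
/-- The number of edges of G inside the vertex set W that are cut by S. -/
noncomputable def cutSize {V : Type*} (G : SimpleGraph V) (W S : Set V) : ℕ :=
  {e : Sym2 V | e ∈ G.edgeSet ∧
    ∃ u v, e = s(u, v) ∧ u ∈ W ∧ v ∈ W ∧ u ∈ S ∧ v ∉ S}.ncard

/-- The maximum size of a cut of the induced subgraph G[W] agreeing with the
fixed cut T on the set C. -/
noncomputable def mcsOn {V : Type*} (G : SimpleGraph V) (W C T : Set V) : ℕ :=
  sSup {m | ∃ S ⊆ W, S ∩ C = T ∩ C ∩ W ∧ m = cutSize G W S}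
open Finset

section Cuts

variable {V : Type*} (G : SimpleGraph V)

def cutEdges (W S : Set V) : Set (Sym2 V) :=
  {e | e ∈ G.edgeSet ∧ ∃ u v, e = s(u, v) ∧ u ∈ W ∧ v ∈ W ∧ u ∈ S ∧ v ∉ S}

theorem cutSize_eq_ncard_cutEdges (W S : Set V) : cutSize G W S = (cutEdges G W S).ncard := rfl

variable {G}

theorem cutEdges_mono {W W' : Set V} (hW : W ⊆ W') (S : Set V) :
    cutEdges G W S ⊆ cutEdges G W' S := by
  rintro e ⟨he, u, v, rfl, hu, hv, huS, hvS⟩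
  exact ⟨he, u, v, rfl, hW hu, hW hv, huS, hvS⟩

theorem eq_of_sym2_eq_of_mem_of_not_mem {S : Set V} {u v u' v' : V} (h : s(u, v) = s(u', v'))
    (hu : u ∈ S) (hv' : v' ∉ S) : u = u' ∧ v = v' := by
  rcases Sym2.eq_iff.1 h with huv | ⟨rfl, rfl⟩
  · exact huv
  · exact absurd hu hv'

theorem cutEdges_inter (W₁ W₂ S : Set V) :
    cutEdges G (W₁ ∩ W₂) S = cutEdges G W₁ S ∩ cutEdges G W₂ S := by
  refine Set.Subset.antisymm (Set.subset_inter (cutEdges_mono Set.inter_subset_left S)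
    (cutEdges_mono Set.inter_subset_right S)) ?_
  rintro e ⟨⟨he, u, v, rfl, hu, hv, huS, hvS⟩, ⟨-, u', v', heq, hu', hv', -, hvS'⟩⟩
  obtain ⟨rfl, rfl⟩ := eq_of_sym2_eq_of_mem_of_not_mem heq huS hvS'
  exact ⟨he, u, v, rfl, ⟨hu, hu'⟩, ⟨hv, hv'⟩, huS, hvS⟩

theorem cutEdges_union {W₁ W₂ : Set V}
    (hsep : ∀ u v, G.Adj u v → u ∈ W₁ ∪ W₂ → v ∈ W₁ ∪ W₂ →
      (u ∈ W₁ ∧ v ∈ W₁) ∨ (u ∈ W₂ ∧ v ∈ W₂)) (S : Set V) :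
    cutEdges G (W₁ ∪ W₂) S = cutEdges G W₁ S ∪ cutEdges G W₂ S := by
  refine Set.Subset.antisymm ?_ (Set.union_subset (cutEdges_mono Set.subset_union_left S)
    (cutEdges_mono Set.subset_union_right S))
  rintro e ⟨he, u, v, rfl, hu, hv, huS, hvS⟩
  rcases hsep u v he hu hv with ⟨hu, hv⟩ | ⟨hu, hv⟩
  · exact Or.inl ⟨he, u, v, rfl, hu, hv, huS, hvS⟩
  · exact Or.inr ⟨he, u, v, rfl, hu, hv, huS, hvS⟩

theorem cutSize_union_add_cutSize_inter [Finite V] {W₁ W₂ : Set V}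
    (hsep : ∀ u v, G.Adj u v → u ∈ W₁ ∪ W₂ → v ∈ W₁ ∪ W₂ →
      (u ∈ W₁ ∧ v ∈ W₁) ∨ (u ∈ W₂ ∧ v ∈ W₂)) (S : Set V) :
    cutSize G (W₁ ∪ W₂) S + cutSize G (W₁ ∩ W₂) S = cutSize G W₁ S + cutSize G W₂ S := by
  simp only [cutSize_eq_ncard_cutEdges, cutEdges_union hsep, cutEdges_inter]
  exact Set.ncard_union_add_ncard_inter _ _

theorem cutSize_inter_self (W S : Set V) : cutSize G W (S ∩ W) = cutSize G W S := by
  simp only [cutSize_eq_ncard_cutEdges, cutEdges, Set.mem_inter_iff]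
  congr 1
  ext e
  constructor
  · rintro ⟨he, u, v, rfl, hu, hv, huS, hvS⟩
    exact ⟨he, u, v, rfl, hu, hv, huS.1, fun h => hvS ⟨h, hv⟩⟩
  · rintro ⟨he, u, v, rfl, hu, hv, huS, hvS⟩
    exact ⟨he, u, v, rfl, hu, hv, ⟨huS, hu⟩, fun h => hvS h.1⟩

theorem cutSize_of_isClique {K : Set V} (hK : G.IsClique K) (S : Set V) :
    cutSize G K S = (S ∩ K).ncard * (K \ S).ncard := by
  have hset : cutEdges G K S = (fun x : V × V => s(x.1, x.2)) '' ((S ∩ K) ×ˢ (K \ S)) := by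
    ext e
    constructor
    · rintro ⟨-, u, v, rfl, hu, hv, huS, hvS⟩
      exact ⟨(u, v), ⟨⟨huS, hu⟩, ⟨hv, hvS⟩⟩, rfl⟩
    · rintro ⟨⟨u, v⟩, ⟨⟨huS, hu⟩, ⟨hv, hvS⟩⟩, rfl⟩
      exact ⟨hK hu hv (fun h => hvS (h ▸ huS)), u, v, rfl, hu, hv, huS, hvS⟩
  have hinj : Set.InjOn (fun x : V × V => s(x.1, x.2)) ((S ∩ K) ×ˢ (K \ S)) := by
    rintro ⟨u, v⟩ ⟨⟨huS, -⟩, -, hvS⟩ ⟨u', v'⟩ ⟨-, -, hvS'⟩ heq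
    obtain ⟨rfl, rfl⟩ := eq_of_sym2_eq_of_mem_of_not_mem heq huS hvS'
    rfl
  rw [cutSize_eq_ncard_cutEdges, hset, hinj.ncard_image, Set.ncard_prod]

theorem cutSize_of_isClique_of_inter_eq {K C S T : Set V} (hK : G.IsClique K)
    (hS : S ∩ C = T ∩ C) (hKC : K ⊆ C) : cutSize G K S = (T ∩ K).ncard * (K \ T).ncard := by
  have hSK : S ∩ K = T ∩ K := by
    rw [← Set.inter_eq_right.2 hKC, ← Set.inter_assoc, hS, Set.inter_assoc]
  have hKS : K \ S = K \ T := by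
    rw [← Set.sdiff_inter_self_eq_sdiff, hSK, Set.sdiff_inter_self_eq_sdiff]
  rw [cutSize_of_isClique hK, hSK, hKS]

end Cuts

section MaxCut

variable {V : Type*} [Finite V] {G : SimpleGraph V} {W C T : Set V}

theorem bddAbove_cutSizes (G : SimpleGraph V) (W C T : Set V) :
    BddAbove {m | ∃ S ⊆ W, S ∩ C = T ∩ C ∩ W ∧ m = cutSize G W S} :=
  ⟨Nat.card (Sym2 V), by rintro m ⟨S, -, -, rfl⟩; exact Set.ncard_le_card _⟩

theorem cutSize_le_mcsOn {S : Set V} (hSW : S ⊆ W) (hS : S ∩ C = T ∩ C ∩ W) :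
    cutSize G W S ≤ mcsOn G W C T :=
  le_csSup (bddAbove_cutSizes G W C T) ⟨S, hSW, hS, rfl⟩

theorem exists_cutSize_eq_mcsOn (G : SimpleGraph V) (W C T : Set V) :
    ∃ S ⊆ W, S ∩ C = T ∩ C ∩ W ∧ cutSize G W S = mcsOn G W C T := by
  have hne : {m | ∃ S ⊆ W, S ∩ C = T ∩ C ∩ W ∧ m = cutSize G W S}.Nonempty :=
    ⟨_, T ∩ C ∩ W, Set.inter_subset_right, Set.inter_eq_left.2 fun _ hv => hv.1.2, rfl⟩
  obtain ⟨S, hSW, hS, hmcs⟩ := Nat.sSup_mem hne (bddAbove_cutSizes G W C T)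
  exact ⟨S, hSW, hS, hmcs.symm⟩

end MaxCut

section Gluing

variable {V : Type*} [Finite V] {G : SimpleGraph V} {C T : Set V} {B : ℕ → Set V} {p D : ℕ}

theorem mcsOn_univ_add_le_sum
    (hcut : ∀ S, S ∩ C = T ∩ C → cutSize G Set.univ S + D = ∑ j ∈ range p, cutSize G (B j) S) :
    mcsOn G Set.univ C T + D ≤ ∑ j ∈ range p, mcsOn G (B j) C T := by
  obtain ⟨S, -, hS, hmcs⟩ := exists_cutSize_eq_mcsOn G Set.univ C T
  rw [Set.inter_univ] at hS
  rw [← hmcs, hcut S hS]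
  refine sum_le_sum fun j _ => ?_
  rw [← cutSize_inter_self]
  refine cutSize_le_mcsOn Set.inter_subset_right ?_
  rw [Set.inter_right_comm, hS]

theorem sum_le_mcsOn_univ_add (hC : ∀ v ∈ C, ∃ j < p, v ∈ B j)
    (hB : ∀ i < p, ∀ j < p, i ≠ j → B i ∩ B j ⊆ C)
    (hcut : ∀ S, S ∩ C = T ∩ C → cutSize G Set.univ S + D = ∑ j ∈ range p, cutSize G (B j) S) :
    ∑ j ∈ range p, mcsOn G (B j) C T ≤ mcsOn G Set.univ C T + D := by
  choose Sf hSfB hSfC hmcs using fun j => exists_cutSize_eq_mcsOn G (B j) C T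
  have hSfT : ∀ j, ∀ v ∈ Sf j, v ∈ C → v ∈ T := fun j v hv hvC =>
    ((hSfC j).le ⟨hv, hvC⟩).1.1
  set S : Set V := {v | ∃ i < p, v ∈ Sf i}
  have hSB : ∀ j < p, S ∩ B j = Sf j := by
    refine fun j hj => Set.Subset.antisymm ?_ fun v hv => ⟨⟨j, hj, hv⟩, hSfB j hv⟩
    rintro v ⟨⟨i, hi, hvi⟩, hvj⟩
    obtain rfl | hij := eq_or_ne i j
    · exact hvi
    · have hvC := hB i hi j hj hij ⟨hSfB i hvi, hvj⟩
      exact ((hSfC j).ge ⟨⟨hSfT i v hvi hvC, hvC⟩, hvj⟩).1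
  have hSC : S ∩ C = T ∩ C := by
    refine Set.Subset.antisymm (fun v ⟨⟨i, _, hvi⟩, hvC⟩ => ⟨hSfT i v hvi hvC, hvC⟩) ?_
    rintro v ⟨hvT, hvC⟩
    obtain ⟨j, hj, hvj⟩ := hC v hvC
    exact ⟨⟨j, hj, ((hSfC j).ge ⟨⟨hvT, hvC⟩, hvj⟩).1⟩, hvC⟩
  calc ∑ j ∈ range p, mcsOn G (B j) C T
      = ∑ j ∈ range p, cutSize G (B j) S := sum_congr rfl fun j hj => by
        rw [← hmcs, ← hSB j (mem_range.1 hj), cutSize_inter_self]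
    _ = cutSize G Set.univ S + D := (hcut S hSC).symm
    _ ≤ mcsOn G Set.univ C T + D := by
        gcongr
        exact cutSize_le_mcsOn (Set.subset_univ S) (by rw [Set.inter_univ, hSC])

theorem mcsOn_univ_add_eq_sum (hC : ∀ v ∈ C, ∃ j < p, v ∈ B j)
    (hB : ∀ i < p, ∀ j < p, i ≠ j → B i ∩ B j ⊆ C)
    (hcut : ∀ S, S ∩ C = T ∩ C → cutSize G Set.univ S + D = ∑ j ∈ range p, cutSize G (B j) S) :
    mcsOn G Set.univ C T + D = ∑ j ∈ range p, mcsOn G (B j) C T :=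
  (mcsOn_univ_add_le_sum hcut).antisymm (sum_le_mcsOn_univ_add hC hB hcut)

end Gluing

section Columns

variable {V : Type*} [Finite V] {G : SimpleGraph V} {col : V → ℕ}

theorem cutSize_band_add_cutSize_column (hloc : ∀ u v, G.Adj u v → col u ≤ col v + 1)
    {a b c : ℕ} (hab : a ≤ b) (hbc : b ≤ c) (S : Set V) :
    cutSize G {v | a ≤ col v ∧ col v ≤ c} S + cutSize G {v | col v = b} S =
      cutSize G {v | a ≤ col v ∧ col v ≤ b} S + cutSize G {v | b ≤ col v ∧ col v ≤ c} S := by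
  have hunion : {v | a ≤ col v ∧ col v ≤ b} ∪ {v | b ≤ col v ∧ col v ≤ c} =
      {v | a ≤ col v ∧ col v ≤ c} := by
    ext v; simp only [Set.mem_union, Set.mem_ofPred_eq]; omega
  have hinter : {v | a ≤ col v ∧ col v ≤ b} ∩ {v | b ≤ col v ∧ col v ≤ c} =
      {v | col v = b} := by
    ext v; simp only [Set.mem_inter_iff, Set.mem_ofPred_eq]; omega
  rw [← hunion, ← hinter]
  refine cutSize_union_add_cutSize_inter (fun u v huv hu hv => ?_) S
  have := hloc u v huv
  have := hloc v u huv.symm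
  simp only [Set.mem_union, Set.mem_ofPred_eq] at hu hv ⊢
  omega

theorem cutSize_band_add_sum_cutSize_column (hloc : ∀ u v, G.Adj u v → col u ≤ col v + 1)
    {l : ℕ → ℕ} {k : ℕ} (hk : 1 ≤ k) (hl : MonotoneOn l (Set.Iic k)) (S : Set V) :
    cutSize G {v | l 0 ≤ col v ∧ col v ≤ l k} S + ∑ j ∈ Ioo 0 k, cutSize G {v | col v = l j} S =
      ∑ j ∈ range k, cutSize G {v | l j ≤ col v ∧ col v ≤ l (j + 1)} S := by
  induction k, hk using Nat.le_induction with
  | base => rw [show Ioo 0 1 = (∅ : Finset ℕ) from rfl]; simp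
  | succ k hk ih =>
    have hlk := hl.mono (Set.Iic_subset_Iic.2 k.le_succ)
    have h0k : l 0 ≤ l k := hlk (Nat.zero_le k) (Set.mem_Iic.2 le_rfl) (Nat.zero_le k)
    have hkk : l k ≤ l (k + 1) := hl k.le_succ (Set.mem_Iic.2 le_rfl) k.le_succ
    rw [sum_range_succ, ← ih hlk, Ioo_add_one_right_eq_Ioc, ← Ioo_insert_right hk,
      sum_insert (by simp)]
    have := cutSize_band_add_cutSize_column hloc h0k hkk S
    omega

end Columns

theorem exists_band_of_le {l : ℕ → ℕ} {p : ℕ} (hp : 0 < p) (hl : MonotoneOn l (Set.Iic p))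
    {j : ℕ} (hj : j ≤ p) : ∃ i < p, l i ≤ l j ∧ l j ≤ l (i + 1) := by
  obtain hjp | rfl := hj.lt_or_eq
  · exact ⟨j, hjp, le_rfl, hl hj hjp (Nat.le_succ j)⟩
  · refine ⟨j - 1, by omega, hl (Nat.sub_le j 1) (Set.mem_Iic.2 le_rfl) (Nat.sub_le j 1), ?_⟩
    rw [Nat.sub_add_cancel hp]

theorem eq_of_mem_band_of_mem_band {l : ℕ → ℕ} {p : ℕ} (hl : MonotoneOn l (Set.Iic p))
    {i j x : ℕ} (hij : i < j) (hj : j ≤ p) (hxi : x ≤ l (i + 1)) (hxj : l j ≤ x) : x = l j :=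
  le_antisymm (hxi.trans (hl (hij.trans_le hj) hj hij)) hxj

namespace IsUBubbleModel

variable {V : Type*} {G : SimpleGraph V} {row col : V → ℕ} {qr qs : V → Bool}

theorem col_le_add_one (h : IsUBubbleModel G row col qr qs) {u v : V} (huv : G.Adj u v) :
    col u ≤ col v + 1 := by
  rcases ((h u v).1 huv).2 with hc | ⟨hc, -⟩ | ⟨hc, -⟩ <;> omega

theorem isClique_column (h : IsUBubbleModel G row col qr qs) (c : ℕ) :
    G.IsClique {v | col v = c} :=
  fun u hu v hv huv => (h u v).2 ⟨huv, Or.inl (hu.trans hv.symm)⟩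

end IsUBubbleModel

theorem maxcut_heavy_parts_decomposition_general {V : Type*} [Fintype V]
    (G : SimpleGraph V) (row col : V → ℕ) (qr qs : V → Bool)
    (h : IsUBubbleModel G row col qr qs)
    (p : ℕ) (hp : 0 < p) (l : ℕ → ℕ)
    (hmono : ∀ i j, i < j → j ≤ p → l i < l j)
    (hcover : ∀ v, l 0 ≤ col v ∧ col v ≤ l p)
    (T : Set V) :
    mcsOn G Set.univ {v | ∃ j ≤ p, col v = l j} T =
      (∑ j ∈ Finset.range p,
        mcsOn G {v | l j ≤ col v ∧ col v ≤ l (j + 1)}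
          {v | ∃ j ≤ p, col v = l j} T) -
      ∑ j ∈ Finset.Ioo 0 p,
        (T ∩ {v | col v = l j}).ncard * ({v | col v = l j} \ T).ncard := by
  have hl : MonotoneOn l (Set.Iic p) :=
    (show StrictMonoOn l (Set.Iic p) from fun i _ j hj hij => hmono i j hij hj).monotoneOn
  refine Nat.eq_sub_of_add_eq (mcsOn_univ_add_eq_sum ?_ ?_ fun S hS => ?_)
  · rintro v ⟨j, hj, hv⟩
    obtain ⟨i, hi, hij⟩ := exists_band_of_le hp hl hj
    exact ⟨i, hi, show l i ≤ col v ∧ col v ≤ l (i + 1) by rw [hv]; exact hij⟩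
  · intro i hi j hj hij v ⟨hvi, hvj⟩
    rcases hij.lt_or_gt with hij | hji
    · exact ⟨j, hj.le, eq_of_mem_band_of_mem_band hl hij hj.le hvi.2 hvj.1⟩
    · exact ⟨i, hi.le, eq_of_mem_band_of_mem_band hl hji hi.le hvj.2 hvi.1⟩
  · rw [← Set.eq_univ_of_forall hcover,
      ← cutSize_band_add_sum_cutSize_column (fun _ _ => h.col_le_add_one) hp hl S]
    congr 1
    refine sum_congr rfl fun j hj => ?_
    exact (cutSize_of_isClique_of_inter_eq (h.isClique_column _) hS
      fun v hv => ⟨j, (mem_Ioo.1 hj).2.le, hv⟩).symm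

/-- Divide and conquer for MaxCut on a U-bubble model: if the light columns
are the columns with indices l 0 < l 1 < ⋯ < l p, covering the model, and T is
a fixed cut of the light columns, then the maximum cut of G agreeing with T on
the light columns equals the sum over the heavy parts (columns from l (j-1) to
l j) of their maximum cuts agreeing with T on the light columns, minus the cut
sizes inside the middle light columns (each column is a clique, so the cut
inside column C_j has size |S_j|·|C_j \ S_j|). -/
theorem maxcut_heavy_parts_decomposition {V : Type*} [Fintype V]
    (G : SimpleGraph V) (row col : V → ℕ) (qr qs : V → Bool)
    (h : IsUBubbleModel G row col qr qs)
    (p : ℕ) (hp : 0 < p) (l : ℕ → ℕ)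
    (hmono : ∀ i j, i < j → j ≤ p → l i < l j)
    (hcover : ∀ v, l 0 ≤ col v ∧ col v ≤ l p)
    (T : Set V) (hT : T ⊆ {v | ∃ j ≤ p, col v = l j}) :
    mcsOn G Set.univ {v | ∃ j ≤ p, col v = l j} T =
      (∑ j ∈ Finset.range p,
        mcsOn G {v | l j ≤ col v ∧ col v ≤ l (j + 1)}
          {v | ∃ j ≤ p, col v = l j} T) -
      ∑ j ∈ Finset.Ioo 0 p,
        (T ∩ {v | col v = l j}).ncard * ({v | col v = l j} \ T).ncard :=
  maxcut_heavy_parts_decomposition_general G row col qr qs h p hp l hmono hcover T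
end
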